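/- arXiv:2204.00551 — 2 statements merged into one kernel-verified Lean document; each statement's English description precedes it below -/
import Mathlib

section
/- Lemma B.2, pointwise form (Hadamard derivative of the selected-sample CDF functional). Let q : [0,1] → ℝ be continuously differentiable with q'(u) > 0 for every u ∈ [0,1] (so q is strictly increasing), let w : [0,1] → ℝ be continuous, and let h : [0,1] → ℝ be continuous. For each t > 0 let h_t : [0,1] → ℝ be bounded and measurable, with sup_{u ∈ [0,1]} |h_t(u) − h(u)| → 0 as t → 0⁺. Fix y ∈ ℝ with q(0) < y < q(1) and let u* ∈ (0,1) be the unique point with q(u*) = y. Then (1/t)·( ∫₀¹ 1{q(u) + t·h_t(u) ≤ y}·w(u) du − ∫₀¹ 1{q(u) ≤ y}·w(u) du ) → − (w(u*)/q'(u*))·h(u*) as t → 0⁺. -/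
/-!
Write `c = h(u*) / q'(u*)`. For every `ε > 0` and all small `t > 0` the perturbed sublevel set
`{u ∈ [0,1] | q u + t H_t u ≤ y}` is squeezed between `[0, u* - t(c + ε)]` and `[0, u* - t(c - ε)]`:
near `u*` this is the first-order expansion of `q` at `u*` together with `H_t → h(u*)` there, and
away from `u*` the strict monotonicity of `q` beats the bounded perturbation `t H_t`.
Since `w` is bounded, the integral of `w` over the sublevel set is then `∫₀^{u* - tc} w + O(tε)`,
and `t ↦ ∫₀^{u* - tc} w` has derivative `-c w(u*)` at `0`.
-/

open MeasureTheory Set Topology Filter Function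

theorem tendsto_sub_mul_nhdsGT (u₀ σ : ℝ) :
    Tendsto (fun t => u₀ - t * σ) (𝓝[>] 0) (𝓝 u₀) := by
  have : Continuous fun t : ℝ => u₀ - t * σ := by fun_prop
  simpa using (this.tendsto 0).mono_left nhdsWithin_le_nhds

theorem HasDerivAt.comp_sub_mul {g : ℝ → ℝ} {g' u₀ : ℝ} (hg : HasDerivAt g g' u₀) (σ : ℝ) :
    HasDerivAt (fun t => g (u₀ - t * σ)) (g' * -σ) 0 := by
  have hline : HasDerivAt (fun t : ℝ => u₀ - t * σ) (-σ) 0 := by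
    simpa using ((hasDerivAt_id (0 : ℝ)).mul_const σ).const_sub u₀
  exact (show HasDerivAt g g' (u₀ - 0 * σ) by simpa using hg).comp 0 hline

theorem HasDerivAt.eventually_lt_add_mul {g : ℝ → ℝ} {g' r x : ℝ} (hg : HasDerivAt g g' x)
    (hr : g' < r) : ∀ᶠ z in 𝓝[>] x, g z < g x + (z - x) * r := by
  filter_upwards [hg.hasDerivWithinAt.limsup_slope_le' (lt_irrefl x) hr, self_mem_nhdsWithin]
    with z hz hxz
  rw [slope_def_field, div_lt_iff₀ (sub_pos.2 hxz)] at hz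
  linarith

theorem TendstoUniformlyOn.tendsto_uncurry {ι α β : Type*} [TopologicalSpace α] [UniformSpace β]
    {F : ι → α → β} {f : α → β} {l : Filter ι} {s : Set α} {x : α}
    (hF : TendstoUniformlyOn F f l s) (hf : ContinuousWithinAt f s x) :
    Tendsto (uncurry F) (l ×ˢ 𝓝[s] x) (𝓝 (f x)) :=
  tendsto_comp_of_locally_uniform_limit_within hf tendsto_snd fun U hU =>
    ⟨s, self_mem_nhdsWithin, tendsto_fst.eventually (hF U hU)⟩

theorem TendstoUniformlyOn.eventually_abs_le {ι α : Type*} {F : ι → α → ℝ} {f : α → ℝ}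
    {l : Filter ι} {s : Set α} {B : ℝ} (hF : TendstoUniformlyOn F f l s)
    (hf : ∀ x ∈ s, |f x| ≤ B) : ∀ᶠ n in l, ∀ x ∈ s, |F n x| ≤ B + 1 := by
  filter_upwards [Metric.tendstoUniformlyOn_iff.1 hF 1 one_pos] with n hn x hx
  have := hn x hx
  rw [Real.dist_eq, abs_sub_comm] at this
  linarith [abs_sub_abs_le_abs_sub (F n x) (f x), hf x hx]

theorem tendstoUniformlyOn_nhdsGT_of_abs_sub_le {α : Type*} {F : ℝ → α → ℝ} {f : α → ℝ}
    {s : Set α} (h : ∀ ε > 0, ∃ δ > 0, ∀ t, 0 < t → t < δ → ∀ x ∈ s, |F t x - f x| ≤ ε) :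
    TendstoUniformlyOn F f (𝓝[>] 0) s := by
  refine Metric.tendstoUniformlyOn_iff.2 fun ε hε => ?_
  obtain ⟨δ, hδ, hFδ⟩ := h (ε / 2) (half_pos hε)
  filter_upwards [Ioo_mem_nhdsGT hδ] with t ht x hx
  rw [dist_comm, Real.dist_eq]
  linarith [hFδ t ht.1 ht.2 x hx]

theorem StrictMonoOn.setOf_le_inter_Icc {α β : Type*} [LinearOrder α] [Preorder β] {q : α → β}
    {a b u₀ : α} (hq : StrictMonoOn q (Icc a b)) (hu₀ : u₀ ∈ Icc a b) :
    {u | q u ≤ q u₀} ∩ Icc a b = Icc a u₀ := by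
  ext u
  refine ⟨fun ⟨hu, hab⟩ => ⟨hab.1, (hq.le_iff_le hab hu₀).1 hu⟩, fun ⟨hau, hu⟩ => ?_⟩
  have hab : u ∈ Icc a b := ⟨hau, hu.trans hu₀.2⟩
  exact ⟨(hq.le_iff_le hab hu₀).2 hu, hab⟩

theorem eventually_add_mul_lt_of_le_sub_mul {q : ℝ → ℝ} {H : ℝ → ℝ → ℝ} {s : Set ℝ}
    {u₀ p a σ C : ℝ} (hq : StrictMonoOn q s) (hs : s ∈ 𝓝 u₀) (hderiv : HasDerivAt q p u₀)
    (hH : Tendsto (uncurry H) (𝓝[>] 0 ×ˢ 𝓝 u₀) (𝓝 a))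
    (hC : ∀ᶠ t in 𝓝[>] 0, ∀ u ∈ s, |H t u| ≤ C) (hσ : a < p * σ) :
    ∀ᶠ t in 𝓝[>] 0, ∀ u ∈ s, u ≤ u₀ - t * σ → q u + t * H t u < q u₀ := by
  set δ := (p * σ - a) / 2 with hδ
  have hslope := (hderiv.comp_sub_mul σ).eventually_lt_add_mul (r := p * -σ + δ) (by linarith)
  obtain ⟨P, hP, Q, hQ, hPQ⟩ := eventually_prod_iff.1
    (hH.eventually (eventually_lt_nhds (show a < a + δ by linarith)))
  obtain ⟨η, hη, hηQ⟩ := Metric.eventually_nhds_iff.1 (hQ.and hs)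
  have hball : ∀ v, |v - u₀| < η → Q v ∧ v ∈ s := fun v hv => hηQ (by rwa [Real.dist_eq])
  obtain ⟨-, hvs⟩ := hball (u₀ - η / 2) (abs_lt.2 ⟨by linarith, by linarith⟩)
  have hqv : q (u₀ - η / 2) < q u₀ := hq hvs (mem_of_mem_nhds hs) (by linarith)
  have hfar : ∀ᶠ t in 𝓝[>] 0, t * C < q u₀ - q (u₀ - η / 2) := by
    have : Tendsto (fun t : ℝ => t * C) (𝓝[>] 0) (𝓝 0) := by
      simpa using ((continuous_mul_const C).tendsto 0).mono_left nhdsWithin_le_nhds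
    exact this.eventually (eventually_lt_nhds (by linarith))
  have hnear : ∀ᶠ t in 𝓝[>] 0, |u₀ - t * σ - u₀| < η / 2 := by
    have := (tendsto_sub_mul_nhdsGT u₀ σ).sub_const u₀
    rw [sub_self] at this
    exact this.abs.eventually (eventually_lt_nhds (by simpa using half_pos hη))
  filter_upwards [hslope, hP, hC, hfar, hnear, self_mem_nhdsWithin]
    with t hslope_t hPt hCt hfar_t hnear_t (ht : 0 < t)
  intro u hu hle
  have hHC : t * H t u ≤ t * C :=
    mul_le_mul_of_nonneg_left ((le_abs_self _).trans (hCt u hu)) ht.le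
  rcases le_or_gt u (u₀ - η / 2) with hfar_u | hnear_u
  · linarith [hq.monotoneOn hu hvs hfar_u]
  · obtain ⟨hnear_t₁, hnear_t₂⟩ := abs_lt.1 hnear_t
    obtain ⟨hQu, -⟩ := hball u (abs_lt.2 ⟨by linarith, by linarith⟩)
    obtain ⟨-, hray_s⟩ := hball (u₀ - t * σ) (abs_lt.2 ⟨by linarith, by linarith⟩)
    have hqu : q u ≤ q (u₀ - t * σ) := hq.monotoneOn hu hray_s hle
    have hHu : t * H t u < t * (a + δ) := mul_lt_mul_of_pos_left (hPQ hPt hQu) ht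
    simp only [zero_mul, sub_zero] at hslope_t
    nlinarith

theorem eventually_lt_sub_mul_of_add_mul_le {q : ℝ → ℝ} {H : ℝ → ℝ → ℝ} {s : Set ℝ}
    {u₀ p a σ C : ℝ} (hq : StrictMonoOn q s) (hs : s ∈ 𝓝 u₀) (hderiv : HasDerivAt q p u₀)
    (hH : Tendsto (uncurry H) (𝓝[>] 0 ×ˢ 𝓝 u₀) (𝓝 a))
    (hC : ∀ᶠ t in 𝓝[>] 0, ∀ u ∈ s, |H t u| ≤ C) (hσ : p * σ < a) :
    ∀ᶠ t in 𝓝[>] 0, ∀ u ∈ s, q u + t * H t u ≤ q u₀ → u < u₀ - t * σ := by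
  have hneg_nhds : Tendsto Neg.neg (𝓝 (-u₀)) (𝓝 u₀) := by simpa using tendsto_neg (-u₀)
  have hreflect := eventually_add_mul_lt_of_le_sub_mul (q := fun u => -q (-u))
    (H := fun t u => -H t (-u)) (s := -s) (u₀ := -u₀) (a := -a) (σ := -σ)
    (fun x hx y hy hxy => neg_lt_neg (hq hy hx (neg_lt_neg hxy)))
    (hneg_nhds.eventually hs)
    (by
      have h := ((show HasDerivAt q p (-(-u₀)) by simpa using hderiv).comp
        (-u₀) (hasDerivAt_neg (-u₀))).neg
      rw [mul_neg_one, neg_neg] at h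
      exact h)
    (hH.comp (tendsto_id.prodMap hneg_nhds)).neg
    (by simpa using hC) (by linarith)
  filter_upwards [hreflect] with t ht u hu hle
  by_contra! hge
  have := ht (-u) (by simpa using hu) (by linarith)
  simp only [neg_neg] at this
  linarith

theorem eventually_Icc_subset_sublevel_subset_Icc {q : ℝ → ℝ} {H : ℝ → ℝ → ℝ}
    {a b u₀ p c C ε : ℝ} (hq : StrictMonoOn q (Icc a b)) (hu₀ : u₀ ∈ Ioo a b)
    (hderiv : HasDerivAt q p u₀) (hp : 0 < p)
    (hH : Tendsto (uncurry H) (𝓝[>] 0 ×ˢ 𝓝 u₀) (𝓝 (p * c)))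
    (hC : ∀ᶠ t in 𝓝[>] 0, ∀ u ∈ Icc a b, |H t u| ≤ C) (hε : 0 < ε) :
    ∀ᶠ t in 𝓝[>] 0, Icc a (u₀ - t * (c + ε)) ⊆ {u | q u + t * H t u ≤ q u₀} ∩ Icc a b ∧
      {u | q u + t * H t u ≤ q u₀} ∩ Icc a b ⊆ Icc a (u₀ - t * (c - ε)) := by
  have hs : Icc a b ∈ 𝓝 u₀ := Icc_mem_nhds hu₀.1 hu₀.2
  filter_upwards
    [eventually_add_mul_lt_of_le_sub_mul hq hs hderiv hH hC (σ := c + ε) (by nlinarith),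
    eventually_lt_sub_mul_of_add_mul_le hq hs hderiv hH hC (σ := c - ε) (by nlinarith),
    (tendsto_sub_mul_nhdsGT u₀ (c + ε)).eventually (Iio_mem_nhds hu₀.2)] with t hlow hup hb
  refine ⟨fun u hu => ?_, fun u ⟨hu, hub⟩ => ⟨hub.1, (hup u hub hu).le⟩⟩
  have hub : u ∈ Icc a b := ⟨hu.1, hu.2.trans hb.le⟩
  exact ⟨(hlow u hub hu.2).le, hub⟩

theorem setIntegral_ite_one_mul {α : Type*} [MeasurableSpace α] {μ : Measure α} {s : Set α}
    {P : α → Prop} [DecidablePred P] (f : α → ℝ) (hs : MeasurableSet s)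
    (hP : NullMeasurableSet {x | P x} (μ.restrict s)) :
    ∫ x in s, (if P x then 1 else 0) * f x ∂μ = ∫ x in {x | P x} ∩ s, f x ∂μ := by
  have : (fun x => (if P x then (1 : ℝ) else 0) * f x) = {x | P x}.indicator f := by
    ext x
    simp [Set.indicator_apply]
  rw [this, integral_indicator₀ hP, Measure.restrict_restrict' hs]

theorem abs_setIntegral_sub_le_of_subset {α : Type*} [MeasurableSpace α] {μ : Measure α}
    {f : α → ℝ} {A S C : Set α} {B : ℝ} (hA : MeasurableSet A) (hAS : A ⊆ S) (hSC : S ⊆ C)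
    (hf : IntegrableOn f S μ) (hCA : μ (C \ A) ≠ ⊤) (hB : ∀ x ∈ C \ A, |f x| ≤ B)
    (hB₀ : 0 ≤ B) :
    |(∫ x in S, f x ∂μ) - ∫ x in A, f x ∂μ| ≤ B * μ.real (C \ A) := by
  have hSA : S \ A ⊆ C \ A := sdiff_subset_sdiff_left hSC
  rw [← setIntegral_sdiff hA hf hAS, ← Real.norm_eq_abs]
  calc ‖∫ x in S \ A, f x ∂μ‖ ≤ B * μ.real (S \ A) :=
        norm_setIntegral_le_of_norm_le_const ((measure_mono hSA).trans_lt hCA.lt_top)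
          fun x hx => hB x (hSA hx)
    _ ≤ B * μ.real (C \ A) := mul_le_mul_of_nonneg_left (measureReal_mono hSA hCA) hB₀

theorem tendsto_slope_setIntegral_Icc {w : ℝ → ℝ} {a b u₀ : ℝ} (hw : ContinuousOn w (Icc a b))
    (hu₀ : u₀ ∈ Ioo a b) (c : ℝ) :
    Tendsto (fun t => t⁻¹ * ((∫ u in Icc a (u₀ - t * c), w u) - ∫ u in Icc a u₀, w u))
      (𝓝[>] 0) (𝓝 (-(c * w u₀))) := by
  have hG : HasDerivAt (fun x => ∫ u in a..x, w u) (w u₀) u₀ :=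
    intervalIntegral.integral_hasDerivAt_right
      ((hw.mono (Icc_subset_Icc_right hu₀.2.le)).intervalIntegrable_of_Icc hu₀.1.le)
      ((hw.mono Ioo_subset_Icc_self).stronglyMeasurableAtFilter isOpen_Ioo u₀ hu₀)
      (hw.continuousAt (Icc_mem_nhds hu₀.1 hu₀.2))
  have hslope := (hG.comp_sub_mul c).tendsto_slope_zero_right
  rw [show -(c * w u₀) = w u₀ * -c by ring]
  refine hslope.congr' ?_
  filter_upwards [(tendsto_sub_mul_nhdsGT u₀ c).eventually (Ioi_mem_nhds hu₀.1)] with t ht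
  simp only [zero_add, zero_mul, sub_zero, smul_eq_mul]
  rw [integral_Icc_eq_integral_Ioc, integral_Icc_eq_integral_Ioc,
    ← intervalIntegral.integral_of_le (le_of_lt ht), ← intervalIntegral.integral_of_le hu₀.1.le]

theorem tendsto_slope_setIntegral_of_sandwich {w : ℝ → ℝ} {S : ℝ → Set ℝ} {a b u₀ c : ℝ}
    (hw : ContinuousOn w (Icc a b)) (hu₀ : u₀ ∈ Ioo a b)
    (hS : ∀ ε > 0, ∀ᶠ t in 𝓝[>] 0,
      Icc a (u₀ - t * (c + ε)) ⊆ S t ∧ S t ⊆ Icc a (u₀ - t * (c - ε))) :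
    Tendsto (fun t => t⁻¹ * ((∫ u in S t, w u) - ∫ u in Icc a u₀, w u))
      (𝓝[>] 0) (𝓝 (-(c * w u₀))) := by
  suffices herr : Tendsto (fun t => t⁻¹ * ((∫ u in S t, w u) - ∫ u in Icc a (u₀ - t * c), w u))
      (𝓝[>] 0) (𝓝 0) by
    simpa [← mul_add] using herr.add (tendsto_slope_setIntegral_Icc hw hu₀ c)
  obtain ⟨B, hB⟩ := isCompact_Icc.exists_bound_of_continuousOn hw
  have hB₀ : 0 ≤ B := (norm_nonneg _).trans (hB u₀ (Ioo_subset_Icc_self hu₀))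
  rw [Metric.tendsto_nhds]
  intro ε hε
  set ε' := ε / (4 * (B + 1)) with hε'
  have hε'₀ : 0 < ε' := by positivity
  filter_upwards [hS ε' hε'₀, (tendsto_sub_mul_nhdsGT u₀ (c - ε')).eventually (Iio_mem_nhds hu₀.2),
    self_mem_nhdsWithin] with t ⟨hlow, hup⟩ hb (ht : 0 < t)
  set A := Icc a (u₀ - t * (c + ε'))
  set C := Icc a (u₀ - t * (c - ε'))
  have hCA : C \ A ⊆ Icc (u₀ - t * (c + ε')) (u₀ - t * (c - ε')) :=
    fun x ⟨⟨hax, hxC⟩, hxA⟩ => ⟨le_of_lt (not_le.1 fun h => hxA ⟨hax, h⟩), hxC⟩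
  have hCI : C ⊆ Icc a b := Icc_subset_Icc_right hb.le
  have hvol : volume.real (C \ A) ≤ 2 * t * ε' := by
    refine (measureReal_mono hCA measure_Icc_lt_top.ne).trans (le_of_eq ?_)
    rw [Real.volume_real_Icc_of_le (by nlinarith)]
    ring
  have hband : ∀ T, A ⊆ T → T ⊆ C → |(∫ u in T, w u) - ∫ u in A, w u| ≤ B * (2 * t * ε') :=
    fun T hAT hTC => (abs_setIntegral_sub_le_of_subset measurableSet_Icc hAT hTC
      (hw.integrableOn_Icc.mono_set (hTC.trans hCI))
      ((measure_mono hCA).trans_lt measure_Icc_lt_top).ne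
      (fun x hx => by simpa using hB x (hCI hx.1)) hB₀).trans
      (mul_le_mul_of_nonneg_left hvol hB₀)
  have hS_band := hband (S t) hlow hup
  have hlin_band := hband (Icc a (u₀ - t * c))
    (Icc_subset_Icc_right (by nlinarith)) (Icc_subset_Icc_right (by nlinarith))
  have hε'B : 4 * B * ε' < ε := by
    rw [hε', mul_div_assoc', div_lt_iff₀ (by positivity)]
    nlinarith
  rw [Real.dist_eq, sub_zero, abs_mul, abs_inv, abs_of_pos ht, inv_mul_lt_iff₀ ht]
  calc |(∫ u in S t, w u) - ∫ u in Icc a (u₀ - t * c), w u|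
      ≤ 4 * B * ε' * t := by
        obtain ⟨h₁, h₂⟩ := abs_le.1 hS_band
        obtain ⟨h₃, h₄⟩ := abs_le.1 hlin_band
        rw [abs_le]
        constructor <;> linarith
    _ < t * ε := by nlinarith

theorem hadamard_derivative_selected_cdf_general
    (q q' w h : ℝ → ℝ) (H : ℝ → ℝ → ℝ)
    (hq_deriv : ∀ u ∈ Icc (0 : ℝ) 1, HasDerivWithinAt q (q' u) (Icc (0 : ℝ) 1) u)
    (hq'_pos : ∀ u ∈ Icc (0 : ℝ) 1, 0 < q' u)
    (hw : ContinuousOn w (Icc (0 : ℝ) 1))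
    (hh : ContinuousOn h (Icc (0 : ℝ) 1))
    (hH : ∀ t : ℝ, 0 < t →
      Measurable (H t) ∧ ∃ M : ℝ, ∀ u ∈ Icc (0 : ℝ) 1, |H t u| ≤ M)
    (hconv : ∀ ε > (0 : ℝ), ∃ δ > (0 : ℝ), ∀ t : ℝ, 0 < t → t < δ →
      ∀ u ∈ Icc (0 : ℝ) 1, |H t u - h u| ≤ ε)
    (y : ℝ)
    (ustar : ℝ) (hustar : ustar ∈ Ioo (0 : ℝ) 1) (hq_ustar : q ustar = y) :
    Tendsto
      (fun t : ℝ =>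
        (1 / t) *
          ((∫ u in Icc (0 : ℝ) 1, (if q u + t * H t u ≤ y then (1 : ℝ) else 0) * w u) -
            ∫ u in Icc (0 : ℝ) 1, (if q u ≤ y then (1 : ℝ) else 0) * w u))
      (𝓝[>] 0) (𝓝 (-(w ustar / q' ustar) * h ustar)) := by
  subst hq_ustar
  have hI : Icc (0 : ℝ) 1 ∈ 𝓝 ustar := Icc_mem_nhds hustar.1 hustar.2
  have hq'₀ : 0 < q' ustar := hq'_pos ustar (mem_of_mem_nhds hI)
  have hq_cont : ContinuousOn q (Icc 0 1) := fun u hu => (hq_deriv u hu).continuousWithinAt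
  have hmono : StrictMonoOn q (Icc 0 1) :=
    strictMonoOn_of_hasDerivWithinAt_pos (convex_Icc 0 1) hq_cont
      (fun u hu => (hq_deriv u (interior_subset hu)).mono interior_subset)
      (fun u hu => hq'_pos u (interior_subset hu))
  have hunif := tendstoUniformlyOn_nhdsGT_of_abs_sub_le hconv
  have hlim : Tendsto (uncurry H) (𝓝[>] 0 ×ˢ 𝓝 ustar) (𝓝 (q' ustar * (h ustar / q' ustar))) := by
    rw [mul_div_cancel₀ _ hq'₀.ne', ← nhdsWithin_eq_nhds.2 hI]
    exact hunif.tendsto_uncurry (hh.continuousWithinAt (mem_of_mem_nhds hI))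
  obtain ⟨B, hB⟩ := isCompact_Icc.exists_bound_of_continuousOn hh
  have hslope := tendsto_slope_setIntegral_of_sandwich hw hustar fun ε hε =>
    eventually_Icc_subset_sublevel_subset_Icc hmono hustar
      ((hq_deriv ustar (mem_of_mem_nhds hI)).hasDerivAt hI) hq'₀ hlim
      (hunif.eventually_abs_le (B := B) fun u hu => by simpa using hB u hu) hε
  rw [show -(w ustar / q' ustar) * h ustar = -(h ustar / q' ustar * w ustar) by ring]
  refine hslope.congr' ?_
  filter_upwards [self_mem_nhdsWithin] with t (ht : 0 < t)
  have hqm := hq_cont.aemeasurable (μ := volume) measurableSet_Icc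
  rw [one_div, setIntegral_ite_one_mul (P := fun u => q u + t * H t u ≤ q ustar) _ measurableSet_Icc
      (nullMeasurableSet_le (hqm.add ((hH t ht).1.aemeasurable.const_mul t)) aemeasurable_const),
    setIntegral_ite_one_mul _ measurableSet_Icc (nullMeasurableSet_le hqm aemeasurable_const),
    hmono.setOf_le_inter_Icc (mem_of_mem_nhds hI)]

/-- Lemma B.2, pointwise form (Hadamard derivative of the selected-sample CDF
functional `F(y; b) := ∫₀¹ 1{b(u) ≤ y}·w(u) du` at `b = q`, in a direction `h`
approached along `h_t`, evaluated at an interior point `y = q(u*)`). -/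
theorem hadamard_derivative_selected_cdf
    (q q' w h : ℝ → ℝ) (H : ℝ → ℝ → ℝ)
    (hq_deriv : ∀ u ∈ Icc (0 : ℝ) 1, HasDerivWithinAt q (q' u) (Icc (0 : ℝ) 1) u)
    (hq'_cont : ContinuousOn q' (Icc (0 : ℝ) 1))
    (hq'_pos : ∀ u ∈ Icc (0 : ℝ) 1, 0 < q' u)
    (hw : ContinuousOn w (Icc (0 : ℝ) 1))
    (hh : ContinuousOn h (Icc (0 : ℝ) 1))
    (hH : ∀ t : ℝ, 0 < t →
      Measurable (H t) ∧ ∃ M : ℝ, ∀ u ∈ Icc (0 : ℝ) 1, |H t u| ≤ M)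
    (hconv : ∀ ε > (0 : ℝ), ∃ δ > (0 : ℝ), ∀ t : ℝ, 0 < t → t < δ →
      ∀ u ∈ Icc (0 : ℝ) 1, |H t u - h u| ≤ ε)
    (y : ℝ) (hy₀ : q 0 < y) (hy₁ : y < q 1)
    (ustar : ℝ) (hustar : ustar ∈ Ioo (0 : ℝ) 1) (hq_ustar : q ustar = y) :
    Tendsto
      (fun t : ℝ =>
        (1 / t) *
          ((∫ u in Icc (0 : ℝ) 1, (if q u + t * H t u ≤ y then (1 : ℝ) else 0) * w u) -
            ∫ u in Icc (0 : ℝ) 1, (if q u ≤ y then (1 : ℝ) else 0) * w u))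
      (𝓝[>] 0) (𝓝 (-(w ustar / q' ustar) * h ustar)) :=
  hadamard_derivative_selected_cdf_general q q' w h H hq_deriv hq'_pos hw hh hH hconv y ustar hustar
    hq_ustar
end

section
/- Lemma B.3 (solution of a Fredholm integral equation of the second kind). Let d be a natural number and let M₁, M₂, M₃, L : [0,1] → Matrix (Fin d) (Fin d) ℝ be continuous functions satisfying, for every τ ∈ [0,1], L(τ) = M₁(τ)·L(τ) + M₂(τ) + ∫₀¹ M₃(u)·L(u) du. Assume: (i) for every τ ∈ [0,1], the matrix I − M₁(τ) is invertible; define M̃₂(τ) := (I − M₁(τ))⁻¹·M₂(τ), M̃₃(τ) := M₃(τ)·(I − M₁(τ))⁻¹, and K := ∫₀¹ M̃₃(u) du; and (ii) Kⁿ → 0 as n → ∞. Then I − K is invertible and, for every τ ∈ [0,1], L(τ) = M̃₂(τ) + (I − M₁(τ))⁻¹·(I − K)⁻¹·∫₀¹ M̃₃(u)·M₂(u) du. -/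
open MeasureTheory Set Topology Filter

/-!
Solving the pointwise equation for `L` gives `L = (I - M₁)⁻¹ (M₂ + J)` with the single unknown
matrix `J = ∫₀¹ M₃ L`. Substituting this back into `J` yields the finite-dimensional equation
`J = K J + ∫₀¹ M̃₃ M₂`, and `Kⁿ → 0` forbids a nonzero fixed vector of `K`, so `I - K` is
invertible and `J = (I - K)⁻¹ ∫₀¹ M̃₃ M₂`.
-/

noncomputable def matIntegral {d : ℕ} (M : ℝ → Matrix (Fin d) (Fin d) ℝ) :
    Matrix (Fin d) (Fin d) ℝ :=
  Matrix.of fun i j => ∫ u in Icc (0 : ℝ) 1, M u i j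

namespace Matrix

variable {n 𝕜 : Type*} [Fintype n] [DecidableEq n] [Field 𝕜]

theorem isUnit_one_sub_of_tendsto_pow_zero [TopologicalSpace 𝕜] [IsTopologicalRing 𝕜]
    [T2Space 𝕜] {K : Matrix n n 𝕜} (hK : Tendsto (K ^ ·) atTop (𝓝 0)) : IsUnit (1 - K) := by
  rw [← mulVec_injective_iff_isUnit]
  refine (injective_iff_map_eq_zero (1 - K).mulVecLin).mpr fun v hv => ?_
  have hKv : K *ᵥ v = v := by
    rw [mulVecLin_apply, sub_mulVec, one_mulVec, sub_eq_zero] at hv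
    exact hv.symm
  have hpow (k : ℕ) : (K ^ k) *ᵥ v = v := by
    induction k with
    | zero => exact one_mulVec v
    | succ k ih => rw [pow_succ, ← mulVec_mulVec, hKv, ih]
  have hlim : Tendsto (fun k : ℕ => (K ^ k) *ᵥ v) atTop (𝓝 (0 *ᵥ v)) :=
    ((continuous_id.matrix_mulVec continuous_const).tendsto 0).comp hK
  simp only [hpow, zero_mulVec] at hlim
  exact tendsto_nhds_unique tendsto_const_nhds hlim

theorem eq_inv_one_sub_mul_of_eq_mul_add {m : Type*} {A : Matrix n n 𝕜} {X B : Matrix n m 𝕜}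
    (hA : IsUnit (1 - A)) (h : X = A * X + B) : X = (1 - A)⁻¹ * B := by
  have hB : (1 - A) * X = B := by
    rw [Matrix.sub_mul, Matrix.one_mul, sub_eq_iff_eq_add']
    exact h
  rw [← hB, nonsing_inv_mul_cancel_left _ _ ((isUnit_iff_isUnit_det _).mp hA)]

end Matrix

theorem ContinuousOn.matrix_inv {X n 𝕜 : Type*} [TopologicalSpace X] [Fintype n]
    [DecidableEq n] [Field 𝕜] [TopologicalSpace 𝕜] [IsTopologicalDivisionRing 𝕜]
    {A : X → Matrix n n 𝕜} {s : Set X} (hA : ContinuousOn A s) (h : ∀ x ∈ s, IsUnit (A x)) :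
    ContinuousOn (fun x => (A x)⁻¹) s := fun x hx =>
  (continuousAt_matrix_inv _ (by
      rw [Ring.inverse_eq_inv']
      exact continuousAt_inv₀ ((Matrix.isUnit_iff_isUnit_det _).mp (h x hx)).ne_zero)
    ).comp_continuousWithinAt (hA x hx)

theorem ContinuousOn.integrableOn_Icc_apply {m n : Type*} {f : ℝ → Matrix m n ℝ} {a b : ℝ}
    (hf : ContinuousOn f (Icc a b)) (i : m) (j : n) :
    IntegrableOn (fun u => f u i j) (Icc a b) :=
  ((continuous_id.matrix_elem i j).comp_continuousOn hf).integrableOn_Icc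

section matIntegral

variable {d : ℕ} {f g : ℝ → Matrix (Fin d) (Fin d) ℝ}

theorem matIntegral_congr (h : EqOn f g (Icc 0 1)) : matIntegral f = matIntegral g := by
  ext i j
  exact setIntegral_congr_fun measurableSet_Icc fun u hu => by rw [h hu]

theorem matIntegral_add (hf : ∀ i j, IntegrableOn (fun u => f u i j) (Icc 0 1))
    (hg : ∀ i j, IntegrableOn (fun u => g u i j) (Icc 0 1)) :
    matIntegral (fun u => f u + g u) = matIntegral f + matIntegral g := by
  ext i j
  exact integral_add (hf i j) (hg i j)

theorem matIntegral_mul_const (hf : ∀ i j, IntegrableOn (fun u => f u i j) (Icc 0 1))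
    (A : Matrix (Fin d) (Fin d) ℝ) :
    matIntegral (fun u => f u * A) = matIntegral f * A := by
  ext i j
  simp only [matIntegral, Matrix.of_apply, Matrix.mul_apply]
  rw [integral_finsetSum _ fun k _ => (hf i k).mul_const (A k j)]
  exact Finset.sum_congr rfl fun k _ => integral_mul_const (A k j) _

end matIntegral

theorem fredholm_second_kind_solution_general
    (d : ℕ) (M₁ M₂ M₃ L : ℝ → Matrix (Fin d) (Fin d) ℝ)
    (hM₁ : ContinuousOn M₁ (Icc (0 : ℝ) 1))
    (hM₂ : ContinuousOn M₂ (Icc (0 : ℝ) 1))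
    (hM₃ : ContinuousOn M₃ (Icc (0 : ℝ) 1))
    (heq : ∀ τ ∈ Icc (0 : ℝ) 1,
      L τ = M₁ τ * L τ + M₂ τ + matIntegral (fun u => M₃ u * L u))
    (hinv : ∀ τ ∈ Icc (0 : ℝ) 1, IsUnit (1 - M₁ τ))
    (K : Matrix (Fin d) (Fin d) ℝ)
    (hK : K = matIntegral (fun u => M₃ u * (1 - M₁ u)⁻¹))
    (hKpow : Tendsto (fun n : ℕ => K ^ n) atTop (𝓝 0)) :
    IsUnit (1 - K) ∧
      ∀ τ ∈ Icc (0 : ℝ) 1,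
        L τ = (1 - M₁ τ)⁻¹ * M₂ τ +
          (1 - M₁ τ)⁻¹ * (1 - K)⁻¹ *
            matIntegral (fun u => M₃ u * (1 - M₁ u)⁻¹ * M₂ u) := by
  have hK_unit := Matrix.isUnit_one_sub_of_tendsto_pow_zero hKpow
  set J := matIntegral fun u => M₃ u * L u
  set C := matIntegral fun u => M₃ u * (1 - M₁ u)⁻¹ * M₂ u
  have hL_solved : ∀ τ ∈ Icc (0 : ℝ) 1, L τ = (1 - M₁ τ)⁻¹ * (M₂ τ + J) := fun τ hτ =>
    Matrix.eq_inv_one_sub_mul_of_eq_mul_add (hinv τ hτ) (by rw [← add_assoc]; exact heq τ hτ)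
  set R := fun u => M₃ u * (1 - M₁ u)⁻¹
  have hR : ContinuousOn R (Icc 0 1) :=
    hM₃.mul (ContinuousOn.matrix_inv (continuousOn_const.sub hM₁) hinv)
  have hJ : J = K * J + C := by
    calc J = matIntegral fun u => R u * M₂ u + R u * J :=
          matIntegral_congr fun u hu => by simp only [R, hL_solved u hu, mul_add, mul_assoc]
      _ = C + K * J := by
          rw [matIntegral_add (f := fun u => R u * M₂ u) (g := fun u => R u * J)
            (hR.mul hM₂).integrableOn_Icc_apply (hR.mul continuousOn_const).integrableOn_Icc_apply,
            matIntegral_mul_const hR.integrableOn_Icc_apply, hK]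
      _ = K * J + C := add_comm _ _
  refine ⟨hK_unit, fun τ hτ => ?_⟩
  rw [hL_solved τ hτ, Matrix.eq_inv_one_sub_mul_of_eq_mul_add hK_unit hJ, mul_add, mul_assoc]

/-- Lemma B.3 (solution of a Fredholm integral equation of the second kind):
if `L(τ) = M₁(τ)L(τ) + M₂(τ) + ∫₀¹ M₃(u)L(u) du` with `I − M₁(τ)` invertible for all
`τ` and `Kⁿ → 0` where `K := ∫₀¹ M₃(u)(I − M₁(u))⁻¹ du`, then `I − K` is invertible
and `L(τ) = (I − M₁(τ))⁻¹M₂(τ) + (I − M₁(τ))⁻¹(I − K)⁻¹ ∫₀¹ M₃(u)(I − M₁(u))⁻¹M₂(u) du`. -/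
theorem fredholm_second_kind_solution
    (d : ℕ) (M₁ M₂ M₃ L : ℝ → Matrix (Fin d) (Fin d) ℝ)
    (hM₁ : ContinuousOn M₁ (Icc (0 : ℝ) 1))
    (hM₂ : ContinuousOn M₂ (Icc (0 : ℝ) 1))
    (hM₃ : ContinuousOn M₃ (Icc (0 : ℝ) 1))
    (hL : ContinuousOn L (Icc (0 : ℝ) 1))
    (heq : ∀ τ ∈ Icc (0 : ℝ) 1,
      L τ = M₁ τ * L τ + M₂ τ + matIntegral (fun u => M₃ u * L u))
    (hinv : ∀ τ ∈ Icc (0 : ℝ) 1, IsUnit (1 - M₁ τ))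
    (K : Matrix (Fin d) (Fin d) ℝ)
    (hK : K = matIntegral (fun u => M₃ u * (1 - M₁ u)⁻¹))
    (hKpow : Tendsto (fun n : ℕ => K ^ n) atTop (𝓝 0)) :
    IsUnit (1 - K) ∧
      ∀ τ ∈ Icc (0 : ℝ) 1,
        L τ = (1 - M₁ τ)⁻¹ * M₂ τ +
          (1 - M₁ τ)⁻¹ * (1 - K)⁻¹ *
            matIntegral (fun u => M₃ u * (1 - M₁ u)⁻¹ * M₂ u) :=
  fredholm_second_kind_solution_general d M₁ M₂ M₃ L hM₁ hM₂ hM₃ heq hinv K hK hKpow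
end
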